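/- arXiv:2003.11568 — 2 statements merged into one kernel-verified Lean document; each statement's English description precedes it below -/
import Mathlib

section
/- Let m ≥ 2, P^m = [[P^{m-1}, α], [αᵀ, β]] a symmetric m×m binary matrix in block form, b^m = (b^{m-1}, b_m), and let c^m, c^{m-1} be the corresponding second-order Reed–Muller sequences of lengths 2^m and 2^{m-1}. Then for all 1 ≤ j ≤ 2^{m-1}: c^m_{2j} = v_j · c^{m-1}_j, where v_j = i^{2 b_m + β + 2 αᵀ a_{j-1}^{m-1}} (exponent computed in ℤ via {0,1}-lifts), and in particular v_j = (-1)^{b_m + αᵀ a_{j-1}^{m-1}} · i^{β}. -/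
open Complex Finset

/-- The `m`-bit binary expansion of `n`, as a vector over ℤ/2,
with the least significant bit as the last coordinate. -/
def binExp (m n : ℕ) : Fin m → ZMod 2 :=
  fun k => if Nat.testBit n (m - 1 - (k : ℕ)) then 1 else 0

/-- Inner product over ℤ/2, lifted to a natural number in {0,1}. -/
def ip {m : ℕ} (u v : Fin m → ZMod 2) : ℕ := (∑ k, u k * v k).val

/-- The second-order Reed–Muller sequence determined by `(P, b)`,
with 0-based index `n` (so the paper's `c_j` is `rmSeq P b (j-1)`). -/
noncomputable def rmSeq {m : ℕ} (P : Matrix (Fin m) (Fin m) (ZMod 2))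
    (b : Fin m → ZMod 2) (n : ℕ) : ℂ :=
  Complex.I ^ (2 * ∑ k, (b k).val * (binExp m n k).val
    + ∑ k, ∑ l, (binExp m n k).val * (P k l).val * (binExp m n l).val)

/-! Splitting off the last coordinate, the odd index `2n+1` has binary expansion `(a_n, 1)`.
The quadratic form then splits into the `Q`-part, the cross terms `2 αᵀ a_n` (by symmetry of `P`)
and `β`; the linear part contributes `b_m`. Since `i` has order 4, the cross terms only matter
modulo 2, which is where `ip` comes in. -/

def natDot {m : ℕ} (u v : Fin m → ZMod 2) : ℕ := ∑ k, (u k).val * (v k).val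

def natQuad {m : ℕ} (P : Matrix (Fin m) (Fin m) (ZMod 2)) (x : Fin m → ZMod 2) : ℕ :=
  ∑ k, ∑ l, (x k).val * (P k l).val * (x l).val

lemma rmSeq_eq_I_pow {m : ℕ} (P : Matrix (Fin m) (Fin m) (ZMod 2)) (b : Fin m → ZMod 2) (n : ℕ) :
    rmSeq P b n = I ^ (2 * natDot b (binExp m n) + natQuad P (binExp m n)) := rfl

lemma ip_eq_natDot_mod_two {m : ℕ} (u v : Fin m → ZMod 2) : ip u v = natDot u v % 2 := by
  rw [ip, natDot, ← ZMod.val_natCast]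
  push_cast
  simp only [ZMod.natCast_val, ZMod.cast_id', id]

lemma natDot_castSucc {m : ℕ} (u v : Fin (m + 1) → ZMod 2) :
    natDot u v = natDot (u ∘ Fin.castSucc) (v ∘ Fin.castSucc)
      + (u (Fin.last m)).val * (v (Fin.last m)).val :=
  Fin.sum_univ_castSucc _

lemma natQuad_castSucc {m : ℕ} {P : Matrix (Fin (m + 1)) (Fin (m + 1)) (ZMod 2)}
    (hP : P.IsSymm) (x : Fin (m + 1) → ZMod 2) :
    natQuad P x = natQuad (P.submatrix Fin.castSucc Fin.castSucc) (x ∘ Fin.castSucc)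
      + 2 * (x (Fin.last m)).val * natDot (fun k => P k.castSucc (Fin.last m)) (x ∘ Fin.castSucc)
      + (x (Fin.last m)).val * (P (Fin.last m) (Fin.last m)).val * (x (Fin.last m)).val := by
  have hsymm : ∀ k : Fin m, P (Fin.last m) k.castSucc = P k.castSucc (Fin.last m) :=
    fun k => hP.apply _ _
  simp only [natQuad, natDot, Fin.sum_univ_castSucc, Finset.sum_add_distrib, hsymm,
    Matrix.submatrix_apply, Function.comp_apply, Finset.mul_sum, ← add_assoc]
  rw [add_assoc (∑ i : Fin m, ∑ j : Fin m, _), ← Finset.sum_add_distrib]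
  congr 2
  refine Finset.sum_congr rfl fun k _ => ?_
  ring

lemma binExp_succ_castSucc (m n : ℕ) (k : Fin m) :
    binExp (m + 1) n k.castSucc = binExp m (n / 2) k := by
  have h : m + 1 - 1 - (k : ℕ) = (m - 1 - (k : ℕ)) + 1 := by omega
  simp only [binExp, Fin.val_castSucc, h, Nat.testBit_succ]

lemma binExp_succ_last_two_mul_add_one (m n : ℕ) :
    binExp (m + 1) (2 * n + 1) (Fin.last m) = 1 := by
  simp [binExp, Nat.testBit_zero]

lemma rmSeq_two_mul_add_one {m : ℕ} {P : Matrix (Fin (m + 1)) (Fin (m + 1)) (ZMod 2)}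
    (hP : P.IsSymm) (b : Fin (m + 1) → ZMod 2) (n : ℕ) :
    rmSeq P b (2 * n + 1)
      = I ^ (2 * (b (Fin.last m)).val + (P (Fin.last m) (Fin.last m)).val
          + 2 * ip (fun k => P k.castSucc (Fin.last m)) (binExp m n))
        * rmSeq (P.submatrix Fin.castSucc Fin.castSucc) (b ∘ Fin.castSucc) n := by
  have hx : binExp (m + 1) (2 * n + 1) ∘ Fin.castSucc = binExp m n := by
    ext k
    simp only [Function.comp_apply, binExp_succ_castSucc]
    congr 1
    omega
  rw [rmSeq_eq_I_pow, rmSeq_eq_I_pow, natDot_castSucc, natQuad_castSucc hP, hx,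
    binExp_succ_last_two_mul_add_one, ip_eq_natDot_mod_two, ← pow_add]
  refine pow_eq_pow_of_modEq ?_ I_pow_four
  simp only [ZMod.val_one, mul_one, one_mul]
  unfold Nat.ModEq
  omega

theorem stmt3_general (m : ℕ)
    (P : Matrix (Fin (m + 1)) (Fin (m + 1)) (ZMod 2)) (hP : P.IsSymm)
    (Q : Matrix (Fin m) (Fin m) (ZMod 2)) (α : Fin m → ZMod 2) (β : ZMod 2)
    (hQ : ∀ k l : Fin m, P (Fin.castSucc k) (Fin.castSucc l) = Q k l)
    (hα : ∀ k : Fin m, P (Fin.castSucc k) (Fin.last m) = α k)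
    (hβ : P (Fin.last m) (Fin.last m) = β)
    (b : Fin (m + 1) → ZMod 2) (b' : Fin m → ZMod 2) (bm : ZMod 2)
    (hb : ∀ k : Fin m, b (Fin.castSucc k) = b' k) (hbm : b (Fin.last m) = bm)
    (j : ℕ) (hj1 : 1 ≤ j) :
    rmSeq P b (2 * j - 1)
      = Complex.I ^ (2 * bm.val + β.val + 2 * ip α (binExp m (j - 1)))
          * rmSeq Q b' (j - 1) ∧
    Complex.I ^ (2 * bm.val + β.val + 2 * ip α (binExp m (j - 1)))
      = (-1 : ℂ) ^ (bm.val + ip α (binExp m (j - 1))) * Complex.I ^ β.val := by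
  obtain rfl : Q = P.submatrix Fin.castSucc Fin.castSucc := by ext k l; exact (hQ k l).symm
  obtain rfl : α = fun k => P k.castSucc (Fin.last m) := funext fun k => (hα k).symm
  obtain rfl : b' = b ∘ Fin.castSucc := funext fun k => (hb k).symm
  subst hβ hbm
  obtain ⟨n, rfl⟩ : ∃ n, j = n + 1 := ⟨j - 1, by omega⟩
  rw [show 2 * (n + 1) - 1 = 2 * n + 1 by omega, Nat.add_sub_cancel]
  refine ⟨rmSeq_two_mul_add_one hP b n, ?_⟩
  rw [show ∀ a c e : ℕ, 2 * a + c + 2 * e = 2 * (a + e) + c by intros; ring, pow_add, pow_mul,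
    I_sq]

/-- The paper's `m` is `m + 1` here. The paper's entry `c^m_{2j}` is `rmSeq P b (2*j-1)`
and `c^{m-1}_j` is `rmSeq Q b' (j-1)`. -/
theorem stmt3 (m : ℕ) (hm : 1 ≤ m)
    (P : Matrix (Fin (m + 1)) (Fin (m + 1)) (ZMod 2)) (hP : P.IsSymm)
    (Q : Matrix (Fin m) (Fin m) (ZMod 2)) (α : Fin m → ZMod 2) (β : ZMod 2)
    (hQ : ∀ k l : Fin m, P (Fin.castSucc k) (Fin.castSucc l) = Q k l)
    (hα : ∀ k : Fin m, P (Fin.castSucc k) (Fin.last m) = α k)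
    (hβ : P (Fin.last m) (Fin.last m) = β)
    (b : Fin (m + 1) → ZMod 2) (b' : Fin m → ZMod 2) (bm : ZMod 2)
    (hb : ∀ k : Fin m, b (Fin.castSucc k) = b' k) (hbm : b (Fin.last m) = bm)
    (j : ℕ) (hj1 : 1 ≤ j) (hj2 : j ≤ 2 ^ m) :
    rmSeq P b (2 * j - 1)
      = Complex.I ^ (2 * bm.val + β.val + 2 * ip α (binExp m (j - 1)))
          * rmSeq Q b' (j - 1) ∧
    Complex.I ^ (2 * bm.val + β.val + 2 * ip α (binExp m (j - 1)))
      = (-1 : ℂ) ^ (bm.val + ip α (binExp m (j - 1))) * Complex.I ^ β.val :=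
  stmt3_general m P hP Q α β hQ hα hβ b b' bm hb hbm j hj1
end

section
/- The map sending a pair (P, b), with P a symmetric m×m matrix over ℤ/2 and b ∈ (ℤ/2)^m, to the second-order Reed–Muller sequence (c_j)_{j=1}^{2^m} with c_j = i^{2 bᵀ a_{j-1} + a_{j-1}ᵀ P a_{j-1}} is injective. Consequently there are exactly 2^{m(m+3)/2} distinct second-order Reed–Muller sequences of length 2^m. -/
/-!
Since `I` has order 4, the sequence determines its exponent `2 bᵀa + aᵀPa` modulo 4 at every
`a ∈ (ℤ/2)^m`, and every `a` occurs as a binary expansion of an index below `2^m`.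
At `a = e_k` the exponent is `2 b_k + P_kk`, whose residue mod 4 determines both bits; at
`a = e_k + e_l` symmetry makes it `2 (b_k + b_l) + P_kk + P_ll + 2 P_kl`, which then determines
`P_kl`. Counting symmetric matrices as functions on unordered pairs gives `2^(m(m+1)/2) · 2^m`.
-/

open Complex Finset

/-- The map `(P, b) ↦ (c_j)_{j=1}^{2^m}`, where `j : Fin (2^m)` stands for the
0-based index `j - 1`. -/
noncomputable def rmMap (m : ℕ) :
    {P : Matrix (Fin m) (Fin m) (ZMod 2) // P.IsSymm} × (Fin m → ZMod 2)
      → (Fin (2 ^ m) → ℂ) :=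
  fun pb j => rmSeq pb.1.1 pb.2 (j : ℕ)

lemma testBit_eq_of_binExp_eq {m n n' : ℕ} (h : binExp m n = binExp m n') {i : ℕ}
    (hi : i < m) : n.testBit i = n'.testBit i := by
  have hk := congrFun h ⟨m - 1 - i, by omega⟩
  simp only [binExp, show m - 1 - (m - 1 - i) = i by omega] at hk
  revert hk
  cases n.testBit i <;> cases n'.testBit i <;> decide

lemma binExp_injective (m : ℕ) : Function.Injective fun j : Fin (2 ^ m) => binExp m j := by
  intro j j' h
  refine Fin.ext (Nat.eq_of_testBit_eq fun i => ?_)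
  rcases lt_or_ge i m with hi | hi
  · exact testBit_eq_of_binExp_eq h hi
  · have hpow : 2 ^ m ≤ 2 ^ i := Nat.pow_le_pow_right two_pos hi
    rw [Nat.testBit_lt_two_pow (j.2.trans_le hpow), Nat.testBit_lt_two_pow (j'.2.trans_le hpow)]

lemma binExp_bijective (m : ℕ) : Function.Bijective fun j : Fin (2 ^ m) => binExp m j :=
  (Fintype.bijective_iff_injective_and_card _).2 ⟨binExp_injective m, by simp⟩

lemma exists_val_binExp_eq {m : ℕ} (x : Fin m → ℕ) (hx : ∀ k, x k < 2) :
    ∃ j : Fin (2 ^ m), (fun k => (binExp m j k).val) = x := by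
  obtain ⟨j, hj⟩ := (binExp_bijective m).2 fun k => (x k : ZMod 2)
  refine ⟨j, funext fun k => ?_⟩
  simp only at hj
  rw [hj, ZMod.val_natCast, Nat.mod_eq_of_lt (hx k)]

lemma I_pow_modEq_of_eq {a b : ℕ} (h : I ^ a = I ^ b) : a ≡ b [MOD 4] := by
  rwa [(isPrimitiveRoot_I.isOfFinOrder four_ne_zero).pow_eq_pow_iff_modEq,
    ← isPrimitiveRoot_I.eq_orderOf] at h

section Exponent

variable {m : ℕ}

/-- The exponent in `rmSeq`, as a function of the `{0,1}`-lift `x` of the index vector. -/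
def rmExponent (P : Matrix (Fin m) (Fin m) (ZMod 2)) (b : Fin m → ZMod 2) (x : Fin m → ℕ) : ℕ :=
  2 * ∑ k, (b k).val * x k + ∑ k, ∑ l, x k * (P k l).val * x l

lemma rmSeq_eq_I_pow_rmExponent (P : Matrix (Fin m) (Fin m) (ZMod 2)) (b : Fin m → ZMod 2)
    (n : ℕ) : rmSeq P b n = I ^ rmExponent P b fun k => (binExp m n k).val :=
  rfl

variable (P : Matrix (Fin m) (Fin m) (ZMod 2)) (b : Fin m → ZMod 2)

lemma rmExponent_single (k : Fin m) :
    rmExponent P b (Pi.single k 1) = 2 * (b k).val + (P k k).val := by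
  simp [rmExponent, Pi.single_apply]

lemma rmExponent_single_add_single (k l : Fin m) :
    rmExponent P b (Pi.single k 1 + Pi.single l 1) =
      2 * ((b k).val + (b l).val) + ((P k k).val + (P k l).val + (P l k).val + (P l l).val) := by
  simp only [rmExponent, Pi.add_apply, Pi.single_apply, mul_add, add_mul, sum_add_distrib,
    mul_ite, ite_mul, mul_one, mul_zero, one_mul, zero_mul, sum_ite_eq', mem_univ, if_true]
  ring

end Exponent

lemma eq_of_rmExponent_modEq {m : ℕ} {P Q : Matrix (Fin m) (Fin m) (ZMod 2)} (hP : P.IsSymm)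
    (hQ : Q.IsSymm) {b c : Fin m → ZMod 2}
    (h : ∀ x : Fin m → ℕ, (∀ k, x k < 2) → rmExponent P b x ≡ rmExponent Q c x [MOD 4]) :
    P = Q ∧ b = c := by
  have hsingle (k : Fin m) : (b k).val = (c k).val ∧ (P k k).val = (Q k k).val := by
    have hk := h (Pi.single k 1) fun i => by rw [Pi.single_apply]; split_ifs <;> omega
    rw [rmExponent_single, rmExponent_single, Nat.ModEq] at hk
    have := ZMod.val_lt (b k); have := ZMod.val_lt (c k)
    have := ZMod.val_lt (P k k); have := ZMod.val_lt (Q k k)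
    omega
  refine ⟨Matrix.ext fun k l => ZMod.val_injective 2 ?_,
    funext fun k => ZMod.val_injective 2 (hsingle k).1⟩
  rcases eq_or_ne k l with rfl | hkl
  · exact (hsingle k).2
  have hkl' := h (Pi.single k 1 + Pi.single l 1) fun i => by
    simp only [Pi.add_apply, Pi.single_apply]; split_ifs <;> simp_all
  rw [rmExponent_single_add_single, rmExponent_single_add_single, Nat.ModEq,
    hP.apply k l, hQ.apply k l] at hkl'
  have := hsingle k; have := hsingle l
  have := ZMod.val_lt (P k l); have := ZMod.val_lt (Q k l)
  omega

theorem rmMap_injective (m : ℕ) : Function.Injective (rmMap m) := by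
  rintro ⟨⟨P, hP⟩, b⟩ ⟨⟨Q, hQ⟩, c⟩ h
  obtain ⟨rfl, rfl⟩ := eq_of_rmExponent_modEq hP hQ fun x hx => by
    obtain ⟨j, rfl⟩ := exists_val_binExp_eq x hx
    exact I_pow_modEq_of_eq <| by
      simpa only [rmMap, rmSeq_eq_I_pow_rmExponent] using congrFun h j
  rfl

def isSymmEquivSym2 (n α : Type*) : {P : Matrix n n α // P.IsSymm} ≃ (Sym2 n → α) where
  toFun P := Sym2.lift ⟨fun i j => P.1 i j, fun i j => P.2.apply j i⟩
  invFun f := ⟨Matrix.of fun i j => f s(i, j), by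
    ext i j; simp [Matrix.transpose_apply, Sym2.eq_swap]⟩
  left_inv P := by ext i j; simp
  right_inv f := by funext x; induction x using Sym2.ind with | _ i j => simp

lemma choose_succ_two_add_self (m : ℕ) : (m + 1).choose 2 + m = m * (m + 3) / 2 := by
  rw [Nat.choose_two_right, add_tsub_cancel_right,
    show m * (m + 3) = (m + 1) * m + 2 * m by ring, Nat.add_mul_div_left _ _ two_pos]

theorem stmt6 (m : ℕ) :
    Function.Injective (rmMap m) ∧
    Nat.card (Set.range (rmMap m)) = 2 ^ (m * (m + 3) / 2) := by
  refine ⟨rmMap_injective m, ?_⟩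
  rw [Nat.card_range_of_injective (rmMap_injective m), Nat.card_prod,
    Nat.card_congr (isSymmEquivSym2 _ _), Nat.card_fun, Nat.card_fun, ← choose_succ_two_add_self,
    pow_add]
  simp [Sym2.card]
end
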